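/- If u is an inner function with u(0) = 0, then the dual compressed shift D_u on K_u^⊥ is unitarily equivalent to S ⊕ S^* on H^2 ⊕ H^2, where S is the unilateral shift and S^* the backward shift. Consequently, for any two inner functions u, v with u(0) = v(0) = 0, D_u and D_v are unitarily equivalent. -/

import Mathlib

open MeasureTheory Complex AddCircle

noncomputable section

namespace Paper

/-- The period `2π`. -/
abbrev T : ℝ := 2 * Real.pi

instance : Fact (0 < T) := ⟨by positivity⟩

/-- Normalized Lebesgue (Haar) measure on the circle. -/
abbrev μ : Measure (AddCircle T) := haarAddCircle

/-- The space `L²(𝕋, dm)`. -/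
abbrev L2 : Type := Lp ℂ 2 μ

lemma memLp_mul {u : AddCircle T → ℂ} (hm : AEStronglyMeasurable u μ)
    (hb : ∀ᵐ x ∂μ, ‖u x‖ ≤ 1) (f : L2) :
    MemLp (fun x => u x * (f : AddCircle T → ℂ) x) 2 μ := by
  refine (Lp.memLp f).of_le (hm.mul (Lp.aestronglyMeasurable f)) ?_
  filter_upwards [hb] with x hx
  calc ‖u x * (f : AddCircle T → ℂ) x‖ = ‖u x‖ * ‖(f : AddCircle T → ℂ) x‖ := norm_mul _ _
    _ ≤ 1 * ‖(f : AddCircle T → ℂ) x‖ := by gcongr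
    _ = ‖(f : AddCircle T → ℂ) x‖ := one_mul _

/-- Multiplication by a measurable function bounded by `1`, as a bounded operator on `L²`. -/
def mulCLM (u : AddCircle T → ℂ) (hm : AEStronglyMeasurable u μ)
    (hb : ∀ᵐ x ∂μ, ‖u x‖ ≤ 1) : L2 →L[ℂ] L2 :=
  LinearMap.mkContinuous
    { toFun := fun f => (memLp_mul hm hb f).toLp _
      map_add' := fun f g => by
        show MemLp.toLp _ (memLp_mul hm hb (f + g)) = _
        have h : (fun x => u x * ((f + g : L2) : AddCircle T → ℂ) x)
            =ᵐ[μ] (fun x => u x * (f : AddCircle T → ℂ) x)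
              + (fun x => u x * (g : AddCircle T → ℂ) x) := by
          filter_upwards [Lp.coeFn_add f g] with x hx
          simp only [Pi.add_apply, hx, mul_add]
        rw [MemLp.toLp_congr (memLp_mul hm hb (f + g))
          ((memLp_mul hm hb f).add (memLp_mul hm hb g)) h, MemLp.toLp_add]
      map_smul' := fun c f => by
        have h : (fun x => u x * ((c • f : L2) : AddCircle T → ℂ) x)
            =ᵐ[μ] c • (fun x => u x * (f : AddCircle T → ℂ) x) := by
          filter_upwards [Lp.coeFn_smul c f] with x hx
          simp only [Pi.smul_apply, hx, smul_eq_mul]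
          ring
        simp only [RingHom.id_apply]
        rw [MemLp.toLp_congr (memLp_mul hm hb (c • f))
          ((memLp_mul hm hb f).const_smul c) h, MemLp.toLp_const_smul] }
    1
    (fun f => by
      simp only [LinearMap.coe_mk, AddHom.coe_mk, one_mul]
      rw [Lp.norm_toLp]
      have h1 : eLpNorm (fun x => u x * (f : AddCircle T → ℂ) x) 2 μ
          ≤ eLpNorm (f : AddCircle T → ℂ) 2 μ := by
        refine eLpNorm_mono_ae ?_
        filter_upwards [hb] with x hx
        calc ‖u x * (f : AddCircle T → ℂ) x‖
            = ‖u x‖ * ‖(f : AddCircle T → ℂ) x‖ := norm_mul _ _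
          _ ≤ 1 * ‖(f : AddCircle T → ℂ) x‖ := by gcongr
          _ = ‖(f : AddCircle T → ℂ) x‖ := one_mul _
      calc (eLpNorm (fun x => u x * (f : AddCircle T → ℂ) x) 2 μ).toReal
          ≤ (eLpNorm (f : AddCircle T → ℂ) 2 μ).toReal :=
            ENNReal.toReal_mono (Lp.eLpNorm_ne_top f) h1
        _ = ‖f‖ := (Lp.norm_def f).symm)

lemma memLp_conj (f : L2) :
    MemLp (fun x => (starRingEnd ℂ) ((f : AddCircle T → ℂ) x)) 2 μ := by
  refine (Lp.memLp f).of_le ?_ ?_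
  · exact Complex.continuous_conj.comp_aestronglyMeasurable (Lp.aestronglyMeasurable f)
  · filter_upwards with x
    simp

/-- Complex conjugation on `L²`. -/
def conjL2 (f : L2) : L2 := (memLp_conj f).toLp _

/-- The independent variable `z = e^{iθ}` as a function on the circle. -/
def zfun : AddCircle T → ℂ := fun x => fourier 1 x

lemma zfun_meas : AEStronglyMeasurable zfun μ :=
  ((map_continuous (fourier (T := T) 1)).aestronglyMeasurable)

lemma zfun_norm : ∀ᵐ x ∂μ, ‖zfun x‖ ≤ 1 := by
  filter_upwards with x
  simp [zfun, Circle.norm_coe]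

/-- Multiplication by `z` (the bilateral shift `M` on `L²`). -/
def Mz : L2 →L[ℂ] L2 := mulCLM zfun zfun_meas zfun_norm

/-- Multiplication by `conj z`. -/
def Mzbar : L2 →L[ℂ] L2 :=
  mulCLM (fun x => (starRingEnd ℂ) (zfun x))
    (Complex.continuous_conj.comp_aestronglyMeasurable zfun_meas)
    (by filter_upwards with x; simp [zfun, Circle.norm_coe])

/-- The Hardy space `H² = {f ∈ L² : f̂(n) = 0 for all n < 0}`. -/
def H2 : Submodule ℂ L2 where
  carrier := {f | ∀ n : ℤ, n < 0 → fourierBasis.repr f n = 0}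
  add_mem' := by
    intro f g hf hg n hn
    simp [map_add, hf n hn, hg n hn]
  zero_mem' := by intro n hn; simp
  smul_mem' := by
    intro c f hf n hn
    simp [_root_.map_smul, hf n hn]

lemma continuous_coeff (n : ℤ) :
    Continuous fun f : L2 => fourierBasis.repr f n := by
  rw [Metric.continuous_iff]
  intro f ε hε
  refine ⟨ε, hε, fun g hg => ?_⟩
  have h1 : fourierBasis.repr g n - fourierBasis.repr f n = fourierBasis.repr (g - f) n := by
    simp [map_sub]
  have h2 : ‖fourierBasis.repr (g - f) n‖ ≤ ‖fourierBasis.repr (g - f)‖ :=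
    lp.norm_apply_le_norm (by norm_num) _ n
  have h3 : ‖fourierBasis.repr (g - f)‖ = ‖g - f‖ :=
    fourierBasis.repr.norm_map _
  calc dist (fourierBasis.repr g n) (fourierBasis.repr f n)
      = ‖fourierBasis.repr (g - f) n‖ := by rw [dist_eq_norm, h1]
    _ ≤ ‖g - f‖ := by rw [← h3]; exact h2
    _ = dist g f := (dist_eq_norm g f).symm
    _ < ε := hg

lemma H2_isClosed : IsClosed (H2 : Set L2) := by
  have : (H2 : Set L2) =
      ⋂ n ∈ {m : ℤ | m < 0}, {f : L2 | fourierBasis.repr f n = 0} := by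
    ext f
    simp only [Set.mem_iInter, Set.mem_setOf_eq]
    rfl
  rw [this]
  exact isClosed_biInter fun n _ => isClosed_eq (continuous_coeff n) continuous_const

instance : CompleteSpace H2 := H2_isClosed.completeSpace_coe

/-- The Riesz projection `P⁺` of `L²` onto `H²`. -/
def Pp : L2 →L[ℂ] L2 := H2.subtypeL ∘L H2.orthogonalProjectionOnto

/-- The projection `P⁻ = I − P⁺` of `L²` onto `conj(H²₀)`. -/
def Pm : L2 →L[ℂ] L2 := ContinuousLinearMap.id ℂ L2 - Pp

/-- `conj(H²₀) = {f ∈ L² : f̂(n) = 0 for all n ≥ 0}`, the orthogonal complement of `H²`. -/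
def Hm : Submodule ℂ L2 where
  carrier := {f | ∀ n : ℤ, 0 ≤ n → fourierBasis.repr f n = 0}
  add_mem' := by
    intro f g hf hg n hn
    simp [map_add, hf n hn, hg n hn]
  zero_mem' := by intro n hn; simp
  smul_mem' := by
    intro c f hf n hn
    simp [_root_.map_smul, hf n hn]

/-- The constant function `1` as an element of `L²`. -/
def oneL2 : L2 := (memLp_const (1 : ℂ)).toLp _

/-- An inner function: a bounded measurable unimodular function on the circle whose
negative Fourier coefficients vanish. -/
structure InnerData where
  u : AddCircle T → ℂ
  meas : AEStronglyMeasurable u μ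
  unim : ∀ᵐ x ∂μ, ‖u x‖ = 1
  anal : ∀ n : ℤ, n < 0 → fourierCoeff u n = 0

namespace InnerData

variable (U : InnerData)

lemma bd : ∀ᵐ x ∂μ, ‖U.u x‖ ≤ 1 := by
  filter_upwards [U.unim] with x hx
  rw [hx]

/-- Multiplication by `u`: the operator `M_u` on `L²`. -/
def M : L2 →L[ℂ] L2 := mulCLM U.u U.meas U.bd

/-- Multiplication by `conj u`: the operator `M_{conj u}` on `L²`. -/
def Mc : L2 →L[ℂ] L2 :=
  mulCLM (fun x => (starRingEnd ℂ) (U.u x))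
    (Complex.continuous_conj.comp_aestronglyMeasurable U.meas)
    (by filter_upwards [U.bd] with x hx; simpa using hx)

/-- `u` as an element of `L²`. -/
def toL2 : L2 :=
  (memLp_top_of_bound U.meas 1 U.bd |>.mono_exponent le_top).toLp _

/-- The value `u(0)` of (the analytic extension of) `u` at the origin, i.e. the mean of `u`. -/
def a0 : ℂ := fourierCoeff U.u 0

/-- The subspace `uH²`. -/
def uH2 : Submodule ℂ L2 := Submodule.map (U.M : L2 →ₗ[ℂ] L2) H2

/-- The model space `K_u = H² ∩ (uH²)ᗮ`. -/
def Ku : Submodule ℂ L2 := H2 ⊓ (U.uH2)ᗮ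

lemma Ku_isClosed : IsClosed (U.Ku : Set L2) := by
  have : (U.Ku : Set L2) = (H2 : Set L2) ∩ ((U.uH2)ᗮ : Set L2) := rfl
  rw [this]
  exact H2_isClosed.inter (U.uH2).isClosed_orthogonal

instance : CompleteSpace U.Ku := U.Ku_isClosed.completeSpace_coe

/-- `K_u^⊥`, the orthogonal complement of the model space in `L²`. -/
def KP : Submodule ℂ L2 := (U.Ku)ᗮ

instance : CompleteSpace U.KP := (U.Ku).isClosed_orthogonal.completeSpace_coe

/-- The orthogonal projection `P_u : L² → K_u` (viewed as an operator on `L²`). -/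
def Pu : L2 →L[ℂ] L2 := (U.Ku).subtypeL ∘L U.Ku.orthogonalProjectionOnto

/-- The dual of the compressed shift: `D_u = (I − P_u) M_z |_{K_u^⊥}`. -/
def Du : U.KP →L[ℂ] U.KP :=
  U.KP.orthogonalProjectionOnto ∘L Mz ∘L (U.KP).subtypeL

/-- The conjugation `C_u f = u · conj(z f)` on `L²`. -/
def C (f : L2) : L2 := U.M (conjL2 (Mz f))

/-- The reproducing kernel of `K_u` at `0`: `k₀ᵘ = 1 − conj(u(0))·u`. -/
def k0 : L2 := oneL2 - (starRingEnd ℂ) U.a0 • U.toL2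

/-- The similarity `V_u = P⁻ + (conj u/conj u(0)) P⁺` of the paper. -/
def V : L2 →L[ℂ] L2 := Pm + ((starRingEnd ℂ) U.a0)⁻¹ • (U.Mc ∘L Pp)

/-- The inverse similarity `V_u⁻¹ = P⁻ + conj(u(0)) u P⁺`. -/
def Vinv : L2 →L[ℂ] L2 := Pm + (starRingEnd ℂ) U.a0 • (U.M ∘L Pp)

end InnerData

lemma Mz_mem_H2 {f : L2} (hf : f ∈ H2) : Mz f ∈ H2 := by
  intro n hn
  rw [fourierBasis_repr]
  have hcoe : (Mz f : AddCircle T → ℂ) =ᵐ[μ] fun x => zfun x * (f : AddCircle T → ℂ) x :=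
    MemLp.coeFn_toLp (memLp_mul zfun_meas zfun_norm f)
  have h1 : fourierCoeff (Mz f : AddCircle T → ℂ) n
      = fourierCoeff (f : AddCircle T → ℂ) (n - 1) := by
    unfold fourierCoeff
    rw [integral_congr_ae (by filter_upwards [hcoe] with x hx; rw [hx])]
    refine integral_congr_ae ?_
    filter_upwards with x
    have : fourier (-n) x * zfun x = fourier (-(n - 1)) x := by
      unfold zfun
      rw [show (-(n - 1) : ℤ) = -n + 1 by ring, fourier_add]
    simp only [smul_eq_mul]
    calc fourier (-n) x * (zfun x * (f : AddCircle T → ℂ) x)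
        = (fourier (-n) x * zfun x) * (f : AddCircle T → ℂ) x := by ring
      _ = fourier (-(n - 1)) x * (f : AddCircle T → ℂ) x := by rw [this]
  rw [h1]
  have := hf (n - 1) (by omega)
  rwa [fourierBasis_repr] at this

/-- The unilateral shift `S` on `H²`. -/
def Shift : H2 →L[ℂ] H2 :=
  (Mz ∘L H2.subtypeL).codRestrict H2 (fun x => Mz_mem_H2 x.2)

/-! The map `(h, g) ↦ u h + z̄ g(z̄)` is a unitary from `H² ⊕ H²` onto `K_u^⊥ = uH² ⊕ conj(H²₀)`:
it is isometric because `u` is unimodular and `uH² ⊂ H² ⊥ conj(H²₀)`, and the orthogonal complement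
of its range lies in `H² ∩ (uH²)^⊥ = K_u`. Multiplication by `z` commutes with `u`, so it acts as
`S` on the first summand, while `z · z̄ g(z̄) = z̄ (S^* g)(z̄) + ĝ(0)`. When `u(0) = 0` the constant
`ĝ(0)` lies in `K_u`, so `I − P_u` removes it and `D_u` becomes `S ⊕ S^*`. Two such operators are
then equivalent through this common model. -/

open ComplexConjugate InnerProductSpace

theorem _root_.Memℓp.comp_equiv {ι E : Type*} [NormedAddCommGroup E] {f : ι → E}
    {p : ENNReal} (hf : Memℓp f p) (hp : 0 < p.toReal) (e : ι ≃ ι) : Memℓp (f ∘ e) p :=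
  memℓp_gen (e.summable_iff.2 ((memℓp_gen_iff hp).1 hf))

def _root_.lp.compEquiv {𝕜 E ι : Type*} [NormedField 𝕜] [NormedAddCommGroup E]
    [NormedSpace 𝕜 E] (e : ι ≃ ι) : lp (fun _ : ι => E) 2 →ₗᵢ[𝕜] lp (fun _ : ι => E) 2 where
  toFun a := ⟨a ∘ e, Memℓp.comp_equiv (lp.memℓp a) (by norm_num) e⟩
  map_add' _ _ := rfl
  map_smul' _ _ := rfl
  norm_map' a := by
    simp only [lp.norm_eq_tsum_rpow (by norm_num : 0 < (2 : ENNReal).toReal)]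
    congr 1
    exact e.tsum_eq (fun i => ‖a i‖ ^ (2 : ENNReal).toReal)

lemma _root_.lp.compEquiv_apply {𝕜 E ι : Type*} [NormedField 𝕜] [NormedAddCommGroup E]
    [NormedSpace 𝕜 E] (e : ι ≃ ι) (a : lp (fun _ : ι => E) 2) (i : ι) :
    lp.compEquiv (𝕜 := 𝕜) e a i = a (e i) := rfl

theorem _root_.Submodule.eq_of_le_of_orthogonal_inf_eq_bot {𝕜 E : Type*} [RCLike 𝕜]
    [NormedAddCommGroup E] [InnerProductSpace 𝕜 E] {K₁ K₂ : Submodule 𝕜 E}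
    [K₁.HasOrthogonalProjection] (h : K₁ ≤ K₂) (h' : K₁ᗮ ⊓ K₂ = ⊥) : K₁ = K₂ := by
  simpa [h'] using Submodule.sup_orthogonal_inf_of_hasOrthogonalProjection h

instance _root_.LinearIsometry.completeSpace_range {R E F : Type*} [Semiring R]
    [SeminormedAddCommGroup E] [Module R E] [CompleteSpace E]
    [SeminormedAddCommGroup F] [Module R F] (J : E →ₗᵢ[R] F) :
    CompleteSpace (LinearMap.range J.toLinearMap) :=
  (J.isometry.isUniformInducing.isComplete_range).completeSpace_coe

lemma repr_ext {f g : L2} (h : ∀ n, fourierBasis.repr f n = fourierBasis.repr g n) : f = g :=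
  fourierBasis.repr.injective (lp.ext (funext h))

lemma repr_fourierBasis (m n : ℤ) :
    fourierBasis.repr (fourierBasis m : L2) n = if n = m then 1 else 0 := by
  rw [HilbertBasis.repr_self, lp.single_apply, Pi.single_apply]

lemma inner_eq_tsum_repr (f g : L2) :
    ⟪f, g⟫_ℂ = ∑' n : ℤ, conj (fourierBasis.repr f n) * fourierBasis.repr g n := by
  rw [← fourierBasis.repr.inner_map_map f g, lp.inner_eq_tsum]
  exact tsum_congr fun n => by rw [RCLike.inner_apply, mul_comm]

lemma fourierBasis_mem_H2 {n : ℤ} (hn : 0 ≤ n) : (fourierBasis n : L2) ∈ H2 := by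
  intro m hm
  rw [repr_fourierBasis, if_neg (by omega)]

lemma oneL2_eq_fourierBasis : oneL2 = fourierBasis 0 := by
  refine Lp.ext ?_
  filter_upwards [(memLp_const (1 : ℂ)).coeFn_toLp, coeFn_fourierLp (T := T) 2 0] with x h1 h2
  rw [oneL2, h1, coe_fourierBasis, h2, fourier_zero]

lemma inner_eq_zero_of_mem_H2_of_mem_Hm {f g : L2} (hf : f ∈ H2) (hg : g ∈ Hm) :
    ⟪f, g⟫_ℂ = 0 := by
  rw [inner_eq_tsum_repr]
  refine (tsum_congr fun n => ?_).trans tsum_zero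
  rcases lt_or_ge n 0 with hn | hn
  · rw [hf n hn, map_zero, zero_mul]
  · rw [hg n hn, mul_zero]

lemma mulCLM_coeFn (u : AddCircle T → ℂ) (hm : AEStronglyMeasurable u μ)
    (hb : ∀ᵐ x ∂μ, ‖u x‖ ≤ 1) (f : L2) :
    (mulCLM u hm hb f : AddCircle T → ℂ) =ᵐ[μ] fun x => u x * f x :=
  (memLp_mul hm hb f).coeFn_toLp

lemma Mz_coeFn (f : L2) : (Mz f : AddCircle T → ℂ) =ᵐ[μ] fun x => zfun x * f x :=
  mulCLM_coeFn _ _ _ f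

lemma repr_Mz (f : L2) (n : ℤ) :
    fourierBasis.repr (Mz f) n = fourierBasis.repr f (n - 1) := by
  rw [fourierBasis_repr, fourierBasis_repr, fourierCoeff_congr_ae (Mz_coeFn f)]
  refine integral_congr_ae (Filter.Eventually.of_forall fun x => ?_)
  simp only [zfun, smul_eq_mul, ← mul_assoc, ← fourier_add]
  ring_nf

lemma Mz_fourierBasis (n : ℤ) : Mz (fourierBasis n) = fourierBasis (n + 1) :=
  repr_ext fun m => by simp only [repr_Mz, repr_fourierBasis, sub_eq_iff_eq_add]

/-- The flip `f(z) ↦ z̄ f(z̄)`, written on Fourier coefficients. -/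
def flipL2 : L2 →ₗᵢ[ℂ] L2 :=
  fourierBasis.repr.symm.toLinearIsometry.comp
    ((lp.compEquiv (Equiv.subLeft (-1 : ℤ))).comp fourierBasis.repr.toLinearIsometry)

lemma repr_flipL2 (f : L2) (n : ℤ) :
    fourierBasis.repr (flipL2 f) n = fourierBasis.repr f (-1 - n) := by
  simp [flipL2, lp.compEquiv_apply]

lemma flipL2_fourierBasis (n : ℤ) : flipL2 (fourierBasis n) = fourierBasis (-1 - n) :=
  repr_ext fun m => by
    simp only [repr_flipL2, repr_fourierBasis]
    congr 1
    simp only [eq_iff_iff]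
    omega

lemma flipL2_mem_Hm {g : L2} (hg : g ∈ H2) : flipL2 g ∈ Hm := by
  intro n hn
  rw [repr_flipL2, hg _ (by omega)]

lemma repr_adjoint_Shift (g : H2) {n : ℤ} (hn : 0 ≤ n) :
    fourierBasis.repr (ContinuousLinearMap.adjoint Shift g : L2) n
      = fourierBasis.repr (g : L2) (n + 1) := by
  rw [HilbertBasis.repr_apply_apply, HilbertBasis.repr_apply_apply]
  have he : (fourierBasis n : L2) = ((⟨_, fourierBasis_mem_H2 hn⟩ : H2) : L2) := rfl
  rw [he, ← Submodule.coe_inner, ContinuousLinearMap.adjoint_inner_right, Submodule.coe_inner]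
  exact congrArg (⟪·, (g : L2)⟫_ℂ) (Mz_fourierBasis n)

lemma Mz_flipL2 (g : H2) :
    Mz (flipL2 g) = flipL2 (ContinuousLinearMap.adjoint Shift g)
      + fourierBasis.repr (g : L2) 0 • oneL2 := by
  refine repr_ext fun n => ?_
  simp only [repr_Mz, repr_flipL2, map_add, map_smul, lp.coeFn_add, lp.coeFn_smul, Pi.add_apply,
    Pi.smul_apply, smul_eq_mul, oneL2_eq_fourierBasis, repr_fourierBasis]
  rcases lt_trichotomy n 0 with hn | rfl | hn
  · rw [repr_adjoint_Shift g (by omega), if_neg hn.ne, mul_zero, add_zero,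
      show -1 - n + 1 = -1 - (n - 1) by ring]
  · rw [(ContinuousLinearMap.adjoint Shift g).2 _ (by norm_num)]
    simp
  · rw [g.2 _ (by omega), (ContinuousLinearMap.adjoint Shift g).2 _ (by omega), if_neg hn.ne']
    simp

namespace InnerData

variable (U : InnerData)

lemma M_coeFn (f : L2) : (U.M f : AddCircle T → ℂ) =ᵐ[μ] fun x => U.u x * f x :=
  mulCLM_coeFn _ _ _ f

lemma Mc_coeFn (f : L2) : (U.Mc f : AddCircle T → ℂ) =ᵐ[μ] fun x => conj (U.u x) * f x :=
  mulCLM_coeFn _ _ _ f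

lemma inner_M_left (f g : L2) : ⟪U.M f, g⟫_ℂ = ⟪f, U.Mc g⟫_ℂ := by
  rw [L2.inner_def, L2.inner_def]
  refine integral_congr_ae ?_
  filter_upwards [U.M_coeFn f, U.Mc_coeFn g] with x hf hg
  simp only [hf, hg, RCLike.inner_apply, map_mul]
  ring

lemma inner_M_M (f g : L2) : ⟪U.M f, U.M g⟫_ℂ = ⟪f, g⟫_ℂ := by
  rw [L2.inner_def, L2.inner_def]
  refine integral_congr_ae ?_
  filter_upwards [U.M_coeFn f, U.M_coeFn g, U.unim] with x hf hg hu
  have hu' : conj (U.u x) * U.u x = 1 := by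
    rw [mul_comm, Complex.mul_conj', hu, Complex.ofReal_one, one_pow]
  simp only [hf, hg, RCLike.inner_apply, map_mul]
  linear_combination ((g : AddCircle T → ℂ) x * conj ((f : AddCircle T → ℂ) x)) * hu'

lemma Mz_M_comm (f : L2) : Mz (U.M f) = U.M (Mz f) := by
  refine Lp.ext ?_
  filter_upwards [Mz_coeFn (U.M f), U.M_coeFn f, U.M_coeFn (Mz f), Mz_coeFn f]
    with x h1 h2 h3 h4
  rw [h1, h2, h3, h4]
  ring

lemma repr_Mc_fourierBasis (n m : ℤ) :
    fourierBasis.repr (U.Mc (fourierBasis n)) m = conj (fourierCoeff U.u (n - m)) := by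
  have hcoe : (U.Mc (fourierBasis n) : AddCircle T → ℂ)
      =ᵐ[μ] fun x => conj (U.u x) * fourier n x := by
    filter_upwards [U.Mc_coeFn (fourierBasis n), coeFn_fourierLp (T := T) 2 n] with x h1 h2
    rw [h1, coe_fourierBasis, h2]
  rw [fourierBasis_repr, fourierCoeff_congr_ae hcoe, fourierCoeff, fourierCoeff, ← integral_conj]
  refine integral_congr_ae (Filter.Eventually.of_forall fun x => ?_)
  simp only [smul_eq_mul, map_mul, fourier_neg, Complex.conj_conj, sub_eq_add_neg, fourier_add]
  ring

lemma repr_M (f : L2) (n : ℤ) :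
    fourierBasis.repr (U.M f) n = ∑' m : ℤ, fourierCoeff U.u (n - m) * fourierBasis.repr f m := by
  rw [HilbertBasis.repr_apply_apply, ← inner_conj_symm, U.inner_M_left, inner_conj_symm,
    inner_eq_tsum_repr]
  simp only [repr_Mc_fourierBasis, Complex.conj_conj]

lemma fourierCoeff_mul_repr_eq_zero {f : L2} (hf : f ∈ H2) {n m : ℤ} (h : m < 0 ∨ n < m) :
    fourierCoeff U.u (n - m) * fourierBasis.repr f m = 0 := by
  rcases h with h | h
  · rw [hf m h, mul_zero]
  · rw [U.anal _ (by omega), zero_mul]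

lemma M_mem_H2 {f : L2} (hf : f ∈ H2) : U.M f ∈ H2 := by
  intro n hn
  rw [repr_M]
  exact (tsum_congr fun m => U.fourierCoeff_mul_repr_eq_zero hf (by omega)).trans tsum_zero

lemma repr_M_zero {f : L2} (hf : f ∈ H2) :
    fourierBasis.repr (U.M f) 0 = U.a0 * fourierBasis.repr f 0 := by
  rw [repr_M, tsum_eq_single 0 fun m hm => U.fourierCoeff_mul_repr_eq_zero hf (by omega),
    sub_zero, a0]

lemma oneL2_mem_Ku (h0 : U.a0 = 0) : oneL2 ∈ U.Ku := by
  refine ⟨oneL2_eq_fourierBasis ▸ fourierBasis_mem_H2 le_rfl, ?_⟩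
  rintro _ ⟨f, hf, rfl⟩
  rw [← inner_conj_symm, oneL2_eq_fourierBasis, ← HilbertBasis.repr_apply_apply]
  simp [repr_M_zero U hf, h0]

def Jₗ : WithLp 2 (↥H2 × ↥H2) →ₗ[ℂ] L2 :=
  U.M.toLinearMap ∘ₗ H2.subtype ∘ₗ WithLp.fstₗ 2 ℂ _ _
    + flipL2.toLinearMap ∘ₗ H2.subtype ∘ₗ WithLp.sndₗ 2 ℂ _ _

lemma Jₗ_apply (x : WithLp 2 (↥H2 × ↥H2)) : U.Jₗ x = U.M x.fst + flipL2 x.snd := rfl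

lemma inner_Jₗ (x y : WithLp 2 (↥H2 × ↥H2)) : ⟪U.Jₗ x, U.Jₗ y⟫_ℂ = ⟪x, y⟫_ℂ := by
  have hx := inner_eq_zero_of_mem_H2_of_mem_Hm (U.M_mem_H2 x.fst.2) (flipL2_mem_Hm y.snd.2)
  have hy := inner_eq_zero_symm.1 <|
    inner_eq_zero_of_mem_H2_of_mem_Hm (U.M_mem_H2 y.fst.2) (flipL2_mem_Hm x.snd.2)
  rw [Jₗ_apply, Jₗ_apply, inner_add_left, inner_add_right, inner_add_right, hx,
    hy, U.inner_M_M, LinearIsometry.inner_map_map, WithLp.prod_inner_apply,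
    add_zero, zero_add]
  rfl

def J : WithLp 2 (↥H2 × ↥H2) →ₗᵢ[ℂ] L2 :=
  LinearMap.isometryOfInner (𝕜 := ℂ) (E := WithLp 2 (↥H2 × ↥H2)) (E' := L2) U.Jₗ U.inner_Jₗ

lemma J_apply (x : WithLp 2 (↥H2 × ↥H2)) : U.J x = U.M x.fst + flipL2 x.snd := rfl

lemma range_J_le_KP : LinearMap.range U.J.toLinearMap ≤ U.KP := by
  rintro _ ⟨x, rfl⟩ k ⟨hkH2, hkuH2⟩
  rw [LinearIsometry.coe_toLinearMap, J_apply, inner_add_right,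
    inner_eq_zero_of_mem_H2_of_mem_Hm hkH2 (flipL2_mem_Hm x.snd.2), add_zero]
  exact inner_eq_zero_symm.1 (hkuH2 _ ⟨_, x.fst.2, rfl⟩)

lemma orthogonal_range_J_le_Ku : (LinearMap.range U.J.toLinearMap)ᗮ ≤ U.Ku := by
  intro q hq
  have hJ : ∀ x, ⟪U.J x, q⟫_ℂ = 0 := fun x => hq _ ⟨x, rfl⟩
  refine ⟨fun n hn => ?_, ?_⟩
  · have h := hJ (WithLp.toLp 2 (0, ⟨_, fourierBasis_mem_H2 (n := -1 - n) (by omega)⟩))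
    change ⟪U.M 0 + flipL2 (fourierBasis (-1 - n)), q⟫_ℂ = 0 at h
    rwa [map_zero, zero_add, flipL2_fourierBasis, sub_sub_cancel,
      ← HilbertBasis.repr_apply_apply] at h
  · rintro _ ⟨f, hf, rfl⟩
    simpa [J_apply] using hJ (WithLp.toLp 2 (⟨f, hf⟩, 0))

lemma range_J : LinearMap.range U.J.toLinearMap = U.KP :=
  Submodule.eq_of_le_of_orthogonal_inf_eq_bot U.range_J_le_KP <| eq_bot_iff.2 <|
    (inf_le_inf_right _ U.orthogonal_range_J_le_Ku).trans U.Ku.inf_orthogonal_eq_bot.le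

def equivKP : WithLp 2 (↥H2 × ↥H2) ≃ₗᵢ[ℂ] U.KP :=
  U.J.equivRange.trans (LinearIsometryEquiv.ofEq _ _ U.range_J)

lemma coe_equivKP (x : WithLp 2 (↥H2 × ↥H2)) : (U.equivKP x : L2) = U.J x := rfl

/-- `z (u h + flip g) = u (z h) + flip (S^* g) + ĝ(0)`, and the constant lies in `K_u` when
`u(0) = 0`, so projecting onto `K_u^⊥` removes it. -/
lemma Du_equivKP (h0 : U.a0 = 0) (x : WithLp 2 (↥H2 × ↥H2)) :
    U.Du (U.equivKP x)
      = U.equivKP (WithLp.toLp 2 (Shift x.fst, ContinuousLinearMap.adjoint Shift x.snd)) := by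
  apply Subtype.ext
  change U.KP.starProjection (Mz (U.J x)) = _
  refine Submodule.eq_starProjection_of_mem_orthogonal (U.range_J_le_KP ⟨_, rfl⟩) ?_
  have hdiff : Mz (U.J x)
      - U.J (WithLp.toLp 2 (Shift x.fst, ContinuousLinearMap.adjoint Shift x.snd))
        = fourierBasis.repr (x.snd : L2) 0 • oneL2 := by
    rw [J_apply, J_apply, map_add, U.Mz_M_comm, Mz_flipL2]
    change _ - (U.M (Mz x.fst) + flipL2 (ContinuousLinearMap.adjoint Shift x.snd)) = _
    abel
  rw [coe_equivKP, hdiff]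
  exact U.Ku.le_orthogonal_orthogonal (U.Ku.smul_mem _ (U.oneL2_mem_Ku h0))

lemma equivKP_symm_Du (h0 : U.a0 = 0) (f : U.KP) :
    U.equivKP.symm (U.Du f) = WithLp.toLp 2
      (Shift (U.equivKP.symm f).fst, ContinuousLinearMap.adjoint Shift (U.equivKP.symm f).snd) := by
  rw [LinearIsometryEquiv.symm_apply_eq, ← U.Du_equivKP h0, LinearIsometryEquiv.apply_symm_apply]

end InnerData

/-- If `u(0) = 0` then `D_u` is unitarily equivalent to `S ⊕ S^*` on
`H² ⊕ H²`; consequently any two such duals are unitarily equivalent. -/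
theorem Du_unitarily_equiv_shift_oplus_backward (U : InnerData) (h0 : U.a0 = 0) :
    (∃ Z : U.KP ≃ₗᵢ[ℂ] WithLp 2 (↥H2 × ↥H2),
      ∀ f : U.KP,
        (WithLp.equiv 2 (↥H2 × ↥H2)) (Z (U.Du f))
          = (Shift (((WithLp.equiv 2 (↥H2 × ↥H2)) (Z f)).1),
             (ContinuousLinearMap.adjoint Shift) (((WithLp.equiv 2 (↥H2 × ↥H2)) (Z f)).2))) ∧
    (∀ V : InnerData, V.a0 = 0 →
      ∃ Z : U.KP ≃ₗᵢ[ℂ] V.KP, ∀ f : U.KP, Z (U.Du f) = V.Du (Z f)) := by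
  refine ⟨⟨U.equivKP.symm, fun f => by rw [U.equivKP_symm_Du h0]; rfl⟩, fun V hV => ?_⟩
  refine ⟨U.equivKP.symm.trans V.equivKP, fun f => ?_⟩
  rw [LinearIsometryEquiv.trans_apply, LinearIsometryEquiv.trans_apply, U.equivKP_symm_Du h0,
    V.Du_equivKP hV]

end Paper
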